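/- For any compact subset X of a Banach space B, the dual thickness satisfies τ*(X) ≤ d_B(X − X) ≤ 2 d_B(X). -/
import Mathlib


open Filter Metric Set Pointwise Topology

/-- `coverNum X ε` : minimal number of balls of radius `ε` with centres in `X` covering `X`. -/
noncomputable def coverNum {E : Type*} [SeminormedAddCommGroup E] (X : Set E) (ε : ℝ) : ℕ∞ :=
  sInf {n : ℕ∞ | ∃ F : Finset E, ↑F ⊆ X ∧ (X ⊆ ⋃ c ∈ F, Metric.ball c ε) ∧ n = F.card}

/-- extended logarithm of an extended natural number. -/
noncomputable def elog (n : ℕ∞) : EReal :=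
  if n = ⊤ then ⊤ else ((Real.log n.toNat : ℝ) : EReal)

/-- The upper box-counting dimension `d_B(X) = limsup_{ε → 0⁺} log N(X,ε) / (-log ε)`. -/
noncomputable def dimBox {E : Type*} [SeminormedAddCommGroup E] (X : Set E) : EReal :=
  Filter.limsup (fun ε : ℝ => elog (coverNum X ε) / ((-Real.log ε : ℝ) : EReal)) (𝓝[>] 0)

/-- `thickNum X ε` : smallest dimension of a finite-dimensional subspace `V` with
`dist(x, V) ≤ ε` for all `x ∈ X` (`⊤` if none exists). -/
noncomputable def thickNum {E : Type*} [NormedAddCommGroup E] [NormedSpace ℝ E]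
    (X : Set E) (ε : ℝ) : ℕ∞ :=
  sInf {n : ℕ∞ | ∃ V : Submodule ℝ E, FiniteDimensional ℝ V ∧ n = Module.finrank ℝ V ∧
    ∀ x ∈ X, Metric.infDist x (V : Set E) ≤ ε}

/-- The thickness exponent `τ(X) = limsup_{ε → 0⁺} log d(X,ε) / (-log ε)`. -/
noncomputable def thickness {E : Type*} [NormedAddCommGroup E] [NormedSpace ℝ E]
    (X : Set E) : EReal :=
  Filter.limsup (fun ε : ℝ => elog (thickNum X ε) / ((-Real.log ε : ℝ) : EReal)) (𝓝[>] 0)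

/-- `dualThickNum X θ ε` : minimal dimension of a subspace `U ⊆ E*` such that for all
`x, y ∈ X` with `‖x - y‖ ≥ ε` some `φ ∈ U` has `|φ(x-y)| ≥ ε^(1+θ)`. -/
noncomputable def dualThickNum {E : Type*} [NormedAddCommGroup E] [NormedSpace ℝ E]
    (X : Set E) (θ ε : ℝ) : ℕ∞ :=
  sInf {n : ℕ∞ | ∃ U : Submodule ℝ (E →L[ℝ] ℝ), FiniteDimensional ℝ U ∧ n = Module.finrank ℝ U ∧
    ∀ x ∈ X, ∀ y ∈ X, ε ≤ ‖x - y‖ → ∃ φ ∈ U, ε ^ (1 + θ) ≤ |φ (x - y)|}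

noncomputable def dualThickTheta {E : Type*} [NormedAddCommGroup E] [NormedSpace ℝ E]
    (X : Set E) (θ : ℝ) : EReal :=
  Filter.limsup (fun ε : ℝ => elog (dualThickNum X θ ε) / ((-Real.log ε : ℝ) : EReal)) (𝓝[>] 0)

/-- The dual thickness `τ*(X) = lim_{θ → 0⁺} τ*_θ(X)` (the limit exists by monotonicity and
equals the limsup as `θ → 0⁺`). -/
noncomputable def dualThickness {E : Type*} [NormedAddCommGroup E] [NormedSpace ℝ E]
    (X : Set E) : EReal :=
  Filter.limsup (fun θ : ℝ => dualThickTheta X θ) (𝓝[>] 0)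

/-- `sigmaNum X α ε` : minimal dimension of a subspace `V ⊆ E*` such that whenever
`x, y ∈ X` with `‖x - y‖ ≥ ε` there is `Φ ∈ V` with `‖Φ‖ = 1` and `|Φ(x-y)| ≥ α ε`. -/
noncomputable def sigmaNum {E : Type*} [NormedAddCommGroup E] [NormedSpace ℝ E]
    (X : Set E) (α ε : ℝ) : ℕ∞ :=
  sInf {n : ℕ∞ | ∃ V : Submodule ℝ (E →L[ℝ] ℝ), FiniteDimensional ℝ V ∧ n = Module.finrank ℝ V ∧
    ∀ x ∈ X, ∀ y ∈ X, ε ≤ ‖x - y‖ → ∃ Φ ∈ V, ‖Φ‖ = 1 ∧ α * ε ≤ |Φ (x - y)|}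

noncomputable def sigmaExp {E : Type*} [NormedAddCommGroup E] [NormedSpace ℝ E]
    (X : Set E) (α : ℝ) : EReal :=
  Filter.limsup (fun ε : ℝ => elog (sigmaNum X α ε) / ((-Real.log ε : ℝ) : EReal)) (𝓝[>] 0)

/-! ### Auxiliary lemmas -/

lemma elog_nonneg (n : ℕ∞) : 0 ≤ elog n := by
  unfold elog
  split
  · exact le_top
  · rcases Nat.eq_zero_or_pos n.toNat with h | h
    · simp [h]
    · exact_mod_cast Real.log_nonneg (by exact_mod_cast h)

lemma elog_mono : Monotone elog := by
  intro m n h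
  unfold elog
  rcases eq_or_ne n ⊤ with rfl | hn
  · simp
  · have hm : m ≠ ⊤ := fun h' => hn (top_le_iff.mp (h' ▸ h))
    simp only [hm, hn, if_neg, reduceIte]
    norm_cast
    have hmn : m.toNat ≤ n.toNat := by
      lift m to ℕ using hm; lift n to ℕ using hn
      simpa using h
    rcases Nat.eq_zero_or_pos m.toNat with h0 | h0
    · rw [h0]
      rcases Nat.eq_zero_or_pos n.toNat with h1 | h1
      · rw [h1]
      · simpa using Real.log_nonneg (by exact_mod_cast h1)
    · exact Real.log_le_log (by exact_mod_cast h0) (by exact_mod_cast hmn)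

lemma elog_mul_le (m n : ℕ∞) : elog (m * n) ≤ elog m + elog n := by
  rcases eq_or_ne m 0 with rfl | hm0
  · simpa using le_add_of_le_of_nonneg (by simp [elog]) (elog_nonneg n)
  rcases eq_or_ne n 0 with rfl | hn0
  · simpa using le_add_of_nonneg_of_le (elog_nonneg m) (by simp [elog])
  rcases eq_or_ne m ⊤ with rfl | hm
  · rw [show elog ⊤ = ⊤ from if_pos rfl, show elog (⊤ * n) = ⊤ from if_pos (ENat.top_mul hn0),
      EReal.top_add_of_ne_bot (fun h => by simpa [h] using elog_nonneg n)]
  rcases eq_or_ne n ⊤ with rfl | hn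
  · rw [show elog ⊤ = ⊤ from if_pos rfl, show elog (m * ⊤) = ⊤ from if_pos (ENat.mul_top hm0),
      EReal.add_top_of_ne_bot (fun h => by simpa [h] using elog_nonneg m)]
  lift m to ℕ using hm
  lift n to ℕ using hn
  have hmn : ((m:ℕ∞) * n) = ((m*n : ℕ) : ℕ∞) := by push_cast; ring
  have hm0' : m ≠ 0 := fun h => hm0 (by simp [h])
  have hn0' : n ≠ 0 := fun h => hn0 (by simp [h])
  have h2 : ∀ k : ℕ, elog ((k:ℕ) : ℕ∞) = ((Real.log k : ℝ) : EReal) := fun k => by simp [elog]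
  rw [hmn, h2, h2, h2]
  norm_cast
  rw [Nat.cast_mul, Real.log_mul (by exact_mod_cast hm0') (by exact_mod_cast hn0')]

lemma coverNum_le {E : Type*} [SeminormedAddCommGroup E] {X : Set E} {ε : ℝ} {F : Finset E}
    (hF : ↑F ⊆ X) (hc : X ⊆ ⋃ c ∈ F, Metric.ball c ε) : coverNum X ε ≤ F.card :=
  sInf_le ⟨F, hF, hc, rfl⟩

lemma exists_coverNum_finset {E : Type*} [SeminormedAddCommGroup E] {X : Set E}
    (hX : IsCompact X) {ε : ℝ} (hε : 0 < ε) :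
    ∃ F : Finset E, ↑F ⊆ X ∧ (X ⊆ ⋃ c ∈ F, Metric.ball c ε) ∧ coverNum X ε = F.card := by
  obtain ⟨t, hts, htf, htc⟩ := hX.finite_cover_balls hε
  have hne : {n : ℕ∞ | ∃ F : Finset E, ↑F ⊆ X ∧ (X ⊆ ⋃ c ∈ F, Metric.ball c ε) ∧ n = F.card}.Nonempty :=
    ⟨htf.toFinset.card, htf.toFinset, by simpa using hts, by simpa using htc, rfl⟩
  exact csInf_mem hne

lemma coverNum_sub_le {E : Type*} [SeminormedAddCommGroup E] {X : Set E}
    (hX : IsCompact X) {ε : ℝ} (hε : 0 < ε) :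
    coverNum (X - X) ε ≤ coverNum X (ε / 2) * coverNum X (ε / 2) := by
  classical
  obtain ⟨F, hFX, hFc, hFcard⟩ := exists_coverNum_finset hX (by linarith : (0:ℝ) < ε / 2)
  set G : Finset E := (F ×ˢ F).image (fun p => p.1 - p.2) with hG
  have hGX : ↑G ⊆ X - X := by
    intro z hz
    simp only [hG, Finset.coe_image, Set.mem_image] at hz
    obtain ⟨⟨a, b⟩, hab, rfl⟩ := hz
    simp only [Finset.mem_coe, Finset.mem_product] at hab
    exact Set.sub_mem_sub (hFX hab.1) (hFX hab.2)
  have hGc : X - X ⊆ ⋃ c ∈ G, Metric.ball c ε := by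
    rintro z ⟨x, hx, y, hy, rfl⟩
    obtain ⟨_, ⟨a, rfl⟩, _, ⟨ha, rfl⟩, hxa⟩ := hFc hx
    obtain ⟨_, ⟨b, rfl⟩, _, ⟨hb, rfl⟩, hyb⟩ := hFc hy
    refine Set.mem_biUnion (show a - b ∈ G by
      simp only [hG, Finset.mem_image]; exact ⟨(a, b), Finset.mem_product.2 ⟨ha, hb⟩, rfl⟩) ?_
    rw [Metric.mem_ball] at *
    have : dist (x - y) (a - b) ≤ dist x a + dist y b := dist_sub_sub_le _ _ _ _
    linarith
  calc coverNum (X - X) ε ≤ G.card := coverNum_le hGX hGc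
    _ ≤ ((F.card * F.card : ℕ) : ℕ∞) := by
        have : G.card ≤ F.card * F.card := by
          rw [hG]
          exact (Finset.card_image_le).trans (le_of_eq (Finset.card_product F F))
        exact_mod_cast this
    _ = coverNum X (ε / 2) * coverNum X (ε / 2) := by rw [hFcard]; push_cast; ring

lemma eventually_nhdsGT_iff {P : ℝ → Prop} :
    (∀ᶠ x in 𝓝[>] (0:ℝ), P x) ↔ ∃ a : ℝ, 0 < a ∧ ∀ x, 0 < x → x < a → P x := by
  rw [(nhdsGT_basis (0:ℝ)).eventually_iff]
  constructor
  · rintro ⟨a, ha, h⟩; exact ⟨a, ha, fun x hx hxa => h ⟨hx, hxa⟩⟩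
  · rintro ⟨a, ha, h⟩; exact ⟨a, ha, fun x hx => h x hx.1 hx.2⟩

lemma limsup_div_le_of_eventually {h : ℝ → EReal} {c : ℝ}
    (hev : ∀ᶠ ε in 𝓝[>] (0:ℝ), h ε ≤ ((c * (-Real.log ε) : ℝ) : EReal)) :
    Filter.limsup (fun ε : ℝ => h ε / ((-Real.log ε : ℝ) : EReal)) (𝓝[>] 0) ≤ (c : EReal) := by
  apply Filter.limsup_le_of_le (by isBoundedDefault)
  have h1 : ∀ᶠ ε in 𝓝[>] (0:ℝ), ε < 1 :=
    eventually_nhdsGT_iff.2 ⟨1, one_pos, fun x _ hx => hx⟩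
  have h0 : ∀ᶠ ε in 𝓝[>] (0:ℝ), (0:ℝ) < ε := eventually_mem_nhdsWithin
  filter_upwards [hev, h1, h0] with ε hε h1ε h0ε
  have hlog : 0 < -Real.log ε := by
    have := Real.log_neg h0ε h1ε; linarith
  rw [EReal.div_le_iff_le_mul (by exact_mod_cast hlog) (by simp)]
  calc h ε ≤ ((c * (-Real.log ε) : ℝ) : EReal) := hε
    _ = ((-Real.log ε : ℝ) : EReal) * (c : EReal) := by rw [← EReal.coe_mul]; ring_nf

lemma eventually_of_limsup_lt {h : ℝ → EReal} {r : ℝ}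
    (hlt : Filter.limsup (fun ε : ℝ => h ε / ((-Real.log ε : ℝ) : EReal)) (𝓝[>] 0) < (r : EReal)) :
    ∀ᶠ ε in 𝓝[>] (0:ℝ), h ε ≤ ((r * (-Real.log ε) : ℝ) : EReal) := by
  have hev := Filter.eventually_lt_of_limsup_lt hlt
  have h1 : ∀ᶠ ε in 𝓝[>] (0:ℝ), ε < 1 :=
    eventually_nhdsGT_iff.2 ⟨1, one_pos, fun x _ hx => hx⟩
  have h0 : ∀ᶠ ε in 𝓝[>] (0:ℝ), (0:ℝ) < ε := eventually_mem_nhdsWithin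
  filter_upwards [hev, h1, h0] with ε hε h1ε h0ε
  have hlog : 0 < -Real.log ε := by
    have := Real.log_neg h0ε h1ε; linarith
  have := (EReal.div_le_iff_le_mul (b := ((-Real.log ε : ℝ) : EReal))
    (by exact_mod_cast hlog) (by simp)).1 hε.le
  calc h ε ≤ ((-Real.log ε : ℝ) : EReal) * (r : EReal) := this
    _ = ((r * (-Real.log ε) : ℝ) : EReal) := by rw [← EReal.coe_mul]; ring_nf

lemma limsup_quot_nonneg {h : ℝ → EReal} (hnn : ∀ ε, 0 ≤ h ε) :
    (0:EReal) ≤ Filter.limsup (fun ε : ℝ => h ε / ((-Real.log ε : ℝ) : EReal)) (𝓝[>] 0) := by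
  apply Filter.le_limsup_of_frequently_le _ (by isBoundedDefault)
  apply Filter.Eventually.frequently
  have h1 : ∀ᶠ ε in 𝓝[>] (0:ℝ), ε < 1 :=
    eventually_nhdsGT_iff.2 ⟨1, one_pos, fun x _ hx => hx⟩
  have h0 : ∀ᶠ ε in 𝓝[>] (0:ℝ), (0:ℝ) < ε := eventually_mem_nhdsWithin
  filter_upwards [h1, h0] with ε h1ε h0ε
  exact EReal.div_nonneg (hnn ε)
    (by exact_mod_cast (by have := Real.log_neg h0ε h1ε; linarith : (0:ℝ) ≤ -Real.log ε))

lemma dualThickNum_le_coverNum {B : Type*} [NormedAddCommGroup B] [NormedSpace ℝ B]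
    [CompleteSpace B] {X : Set B} (hX : IsCompact X) {θ ε : ℝ} (hε : 0 < ε)
    (h3 : ε ^ θ ≤ 1/3) :
    dualThickNum X θ ε ≤ coverNum (X - X) (ε ^ (1 + 2*θ)) := by
  classical
  have hXX : IsCompact (X - X) := by
    rw [sub_eq_add_neg]
    exact hX.add hX.neg
  set δ := ε ^ (1 + 2*θ) with hδdef
  have hδ : 0 < δ := Real.rpow_pos_of_pos hε _
  obtain ⟨F, hFX, hFc, hcard⟩ := exists_coverNum_finset hXX hδ
  choose φ hφ1 hφ2 using fun z : B => exists_dual_vector'' ℝ z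
  set U := Submodule.span ℝ ((F.image φ : Finset (B →L[ℝ] ℝ)) : Set (B →L[ℝ] ℝ)) with hU
  have hfin : FiniteDimensional ℝ U := by
    apply FiniteDimensional.span_of_finite
    exact (F.image φ).finite_toSet
  have hrank : Module.finrank ℝ U ≤ F.card :=
    (finrank_span_finset_le_card (F.image φ)).trans (Finset.card_image_le)
  have hkey : ε ^ (1 + θ) ≤ ε - 2 * δ := by
    have ht : 0 < ε ^ θ := Real.rpow_pos_of_pos hε _
    have h1 : ε ^ (1 + θ) = ε * ε ^ θ := by
      rw [Real.rpow_add hε, Real.rpow_one]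
    have h2 : δ = ε * (ε ^ θ) ^ 2 := by
      rw [hδdef, Real.rpow_add hε, Real.rpow_one, ← Real.rpow_natCast (ε ^ θ) 2,
        ← Real.rpow_mul hε.le]
      norm_num [mul_comm]
    rw [h1, h2]
    nlinarith [ht.le, h3, hε.le, hε]
  have hmain : ∀ x ∈ X, ∀ y ∈ X, ε ≤ ‖x - y‖ → ∃ ψ ∈ U, ε ^ (1 + θ) ≤ |ψ (x - y)| := by
    intro x hx y hy hxy
    have hmem : x - y ∈ X - X := Set.sub_mem_sub hx hy
    obtain ⟨_, ⟨z, rfl⟩, _, ⟨hzF, rfl⟩, hball⟩ := hFc hmem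
    refine ⟨φ z, Submodule.subset_span
      (by simp only [Finset.coe_image, Set.mem_image]; exact ⟨z, hzF, rfl⟩), ?_⟩
    rw [Metric.mem_ball, dist_eq_norm] at hball
    have hz1 : ε - δ ≤ ‖z‖ := by
      have := norm_sub_norm_le (x - y) z
      linarith [hxy, hball.le, this]
    have hb : |φ z ((x - y) - z)| ≤ δ := by
      calc |φ z ((x - y) - z)| ≤ ‖φ z‖ * ‖(x - y) - z‖ := (φ z).le_opNorm _
        _ ≤ 1 * δ := mul_le_mul (hφ1 z) hball.le (norm_nonneg _) zero_le_one
        _ = δ := one_mul δ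
    have heq : φ z (x - y) = ‖z‖ + φ z ((x - y) - z) := by
      have : (x - y) = z + ((x - y) - z) := by abel
      rw [this, map_add, hφ2 z]
      norm_num
    have : ε - 2 * δ ≤ φ z (x - y) := by
      rw [heq]
      have := abs_le.1 hb
      linarith
    exact (hkey.trans this).trans (le_abs_self _)
  calc dualThickNum X θ ε ≤ (Module.finrank ℝ U : ℕ∞) := sInf_le ⟨U, hfin, rfl, hmain⟩
    _ ≤ (F.card : ℕ∞) := by exact_mod_cast hrank
    _ = coverNum (X - X) δ := hcard.symm

/-! ### Part 2 : `dimBox (X - X) ≤ 2 * dimBox X` -/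

lemma dimBox_sub_le {B : Type*} [NormedAddCommGroup B] [NormedSpace ℝ B]
    (X : Set B) (hX : IsCompact X) : dimBox (X - X) ≤ 2 * dimBox X := by
  have hL0 : (0:EReal) ≤ dimBox X := limsup_quot_nonneg (fun ε => elog_nonneg _)
  rcases eq_or_ne (dimBox X) ⊤ with hLt | hLt
  · rw [hLt, EReal.mul_top_of_pos (by norm_num)]
    exact le_top
  have hLbot : dimBox X ≠ ⊥ := fun h => by simp [h] at hL0
  set l : ℝ := (dimBox X).toReal with hl
  have hlL : ((l:ℝ) : EReal) = dimBox X := EReal.coe_toReal hLt hLbot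
  have hl0 : 0 ≤ l := by
    rw [← EReal.coe_le_coe_iff (x := 0) (y := l), hlL]; exact_mod_cast hL0
  have h2l : (2 : EReal) * dimBox X = ((2 * l : ℝ) : EReal) := by
    rw [← hlL]; norm_cast
  rw [h2l]
  apply EReal.le_of_forall_lt_iff_le.1
  intro z hz
  have hzl : 2 * l < z := by exact_mod_cast hz
  set r : ℝ := (l + z/2) / 2 with hr
  have hlr : l < r := by rw [hr]; linarith
  have hrz : 2 * r < z := by rw [hr]; linarith
  have hr0 : 0 < z - 2*r := by linarith
  have hrpos : 0 ≤ r := by linarith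
  have hlt : dimBox X < (r : EReal) := by rw [← hlL]; exact_mod_cast hlr
  obtain ⟨a, ha, hP⟩ := eventually_nhdsGT_iff.1 (eventually_of_limsup_lt hlt)
  apply limsup_div_le_of_eventually
  set K : ℝ := 2 * r * Real.log 2 / (z - 2*r) with hK
  have hKnn : 0 ≤ K := by
    apply div_nonneg _ hr0.le
    have := Real.log_nonneg (by norm_num : (1:ℝ) ≤ 2)
    positivity
  apply eventually_nhdsGT_iff.2
  refine ⟨min a (Real.exp (-K)), lt_min ha (Real.exp_pos _), fun ε hε hεa => ?_⟩
  have hεa' : ε < a := lt_of_lt_of_le hεa (min_le_left _ _)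
  have hεe : ε < Real.exp (-K) := lt_of_lt_of_le hεa (min_le_right _ _)
  have hδ : 0 < ε / 2 := by linarith
  have hδa : ε / 2 < a := by linarith
  have hbound := hP (ε/2) hδ hδa
  have hlogε : -Real.log ε ≥ K := by
    have := Real.log_lt_log hε hεe
    rw [Real.log_exp] at this
    linarith
  calc elog (coverNum (X - X) ε)
      ≤ elog (coverNum X (ε/2) * coverNum X (ε/2)) :=
        elog_mono (coverNum_sub_le hX hε)
    _ ≤ elog (coverNum X (ε/2)) + elog (coverNum X (ε/2)) := elog_mul_le _ _
    _ ≤ ((r * (-Real.log (ε/2)) : ℝ) : EReal) + ((r * (-Real.log (ε/2)) : ℝ) : EReal) :=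
        add_le_add hbound hbound
    _ = ((2 * (r * (-Real.log (ε/2))) : ℝ) : EReal) := by rw [← EReal.coe_add]; norm_cast; ring
    _ ≤ ((z * (-Real.log ε) : ℝ) : EReal) := by
        apply EReal.coe_le_coe_iff.2
        have hlog2 : Real.log (ε/2) = Real.log ε - Real.log 2 := by
          rw [Real.log_div (ne_of_gt hε) (by norm_num)]
        rw [hlog2]
        have h1 : (z - 2*r) * (-Real.log ε) ≥ (z - 2*r) * K :=
          mul_le_mul_of_nonneg_left hlogε hr0.le
        have h2 : (z - 2*r) * K = 2 * r * Real.log 2 := by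
          rw [hK]; field_simp
        nlinarith [h1, h2]

/-! ### Part 1 : `dualThickness X ≤ dimBox (X - X)` -/

lemma dualThickness_le {B : Type*} [NormedAddCommGroup B] [NormedSpace ℝ B]
    [CompleteSpace B] (X : Set B) (hX : IsCompact X) :
    dualThickness X ≤ dimBox (X - X) := by
  have hD0 : (0:EReal) ≤ dimBox (X - X) := limsup_quot_nonneg (fun ε => elog_nonneg _)
  rcases eq_or_ne (dimBox (X - X)) ⊤ with hDt | hDt
  · rw [hDt]; exact le_top
  have hDbot : dimBox (X - X) ≠ ⊥ := fun h => by simp [h] at hD0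
  set d : ℝ := (dimBox (X - X)).toReal with hd
  have hdD : ((d:ℝ) : EReal) = dimBox (X - X) := EReal.coe_toReal hDt hDbot
  have hd0 : 0 ≤ d := by
    rw [← EReal.coe_le_coe_iff (x := 0) (y := d), hdD]; exact_mod_cast hD0
  rw [← hdD]
  apply EReal.le_of_forall_lt_iff_le.1
  intro z hz
  have hdz : d < z := by exact_mod_cast hz
  set r : ℝ := (d + z) / 2 with hr
  have hdr : d < r := by rw [hr]; linarith
  have hrz : r < z := by rw [hr]; linarith
  have hrpos : 0 < r := by linarith
  have hlt : dimBox (X - X) < (r : EReal) := by rw [← hdD]; exact_mod_cast hdr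
  obtain ⟨a, ha, hP⟩ := eventually_nhdsGT_iff.1 (eventually_of_limsup_lt hlt)
  -- bound dualThickTheta for small θ
  apply Filter.limsup_le_of_le (by isBoundedDefault)
  set s₀ : ℝ := (z - r) / (2 * r) with hs₀
  have hs₀pos : 0 < s₀ := by
    apply div_pos (by linarith) (by linarith)
  apply eventually_nhdsGT_iff.2
  refine ⟨s₀, hs₀pos, fun θ hθ hθs => ?_⟩
  -- show dualThickTheta X θ ≤ z
  have hrθ : r * (1 + 2*θ) ≤ z := by
    have : 2 * r * θ ≤ 2 * r * s₀ := by
      apply mul_le_mul_of_nonneg_left hθs.le (by linarith)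
    have h2 : 2 * r * s₀ = z - r := by rw [hs₀]; field_simp
    nlinarith
  apply limsup_div_le_of_eventually
  apply eventually_nhdsGT_iff.2
  set c : ℝ := (3:ℝ)⁻¹ ^ (1/θ) with hc
  have hcpos : 0 < c := Real.rpow_pos_of_pos (by norm_num) _
  refine ⟨min (min a 1) c, lt_min (lt_min ha one_pos) hcpos, fun ε hε hεm => ?_⟩
  have hεa : ε < a := lt_of_lt_of_le hεm ((min_le_left _ _).trans (min_le_left _ _))
  have hε1 : ε < 1 := lt_of_lt_of_le hεm ((min_le_left _ _).trans (min_le_right _ _))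
  have hεc : ε < c := lt_of_lt_of_le hεm (min_le_right _ _)
  have h3 : ε ^ θ ≤ 1/3 := by
    calc ε ^ θ ≤ c ^ θ := Real.rpow_le_rpow hε.le hεc.le hθ.le
      _ = (3:ℝ)⁻¹ ^ ((1/θ) * θ) := by rw [hc, ← Real.rpow_mul (by norm_num)]
      _ = 1/3 := by rw [one_div, inv_mul_cancel₀ (ne_of_gt hθ), Real.rpow_one]; norm_num
  set δ : ℝ := ε ^ (1 + 2*θ) with hδdef
  have hδpos : 0 < δ := Real.rpow_pos_of_pos hε _
  have hδε : δ ≤ ε := by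
    calc δ = ε ^ (1 + 2*θ) := rfl
      _ ≤ ε ^ (1:ℝ) := Real.rpow_le_rpow_of_exponent_ge hε hε1.le (by linarith)
      _ = ε := Real.rpow_one ε
  have hδa : δ < a := lt_of_le_of_lt hδε hεa
  have hbound := hP δ hδpos hδa
  have hlogδ : Real.log δ = (1 + 2*θ) * Real.log ε := Real.log_rpow hε _
  have hlogε : 0 < -Real.log ε := by
    have := Real.log_neg hε hε1; linarith
  calc elog (dualThickNum X θ ε)
      ≤ elog (coverNum (X - X) δ) := elog_mono (dualThickNum_le_coverNum hX hε h3)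
    _ ≤ ((r * (-Real.log δ) : ℝ) : EReal) := hbound
    _ ≤ ((z * (-Real.log ε) : ℝ) : EReal) := by
        apply EReal.coe_le_coe_iff.2
        rw [hlogδ]
        have : r * (1 + 2*θ) * (-Real.log ε) ≤ z * (-Real.log ε) :=
          mul_le_mul_of_nonneg_right hrθ hlogε.le
        nlinarith [this]

/-- `τ*(X) ≤ d_B(X - X) ≤ 2 d_B(X)` for compact subsets of Banach spaces. -/
theorem dualThickness_le_dimBox_sub {B : Type*}
    [NormedAddCommGroup B] [NormedSpace ℝ B] [CompleteSpace B]
    (X : Set B) (hX : IsCompact X) :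
    dualThickness X ≤ dimBox (X - X) ∧ dimBox (X - X) ≤ 2 * dimBox X :=
  ⟨dualThickness_le X hX, dimBox_sub_le X hX⟩
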